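/- arXiv:2603.28223 — 3 statements merged into one kernel-verified Lean document; each statement's English description precedes it below -/
import Mathlib

section
/- Fix q > 2 and α > −1. For every ρ ∈ (0, q−1) there exists a constant c > 0 (depending only on α, q, ρ) such that for every integer n ≥ 1, ‖ℓ_n^α‖_{L^q(μ_α)} ≥ c · ρ^n · n^{α/2}. -/
/-!
Pair `ℓ_n^α` with `e^{σx}`, `σ = r/(1+r)`. Integrating the explicit sum for `L_n^α` term by term
against the Gamma density and applying the binomial theorem gives
`∫ L_n^α e^{σx} dμ_α = Γ(n+α+1)/(Γ(α+1) n!) · (1+r)^{α+1} (-r)^n`. For `r < q - 1` the exponential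
lies in the dual space `L^{q/(q-1)}(μ_α)`, so Hölder's inequality together with the crude bound
`Γ(n+α+1)/(Γ(α+1) n!) ≥ (α+1)/n` bounds `‖ℓ_n^α‖_q` below by a multiple of `r^n n^{-1/2}`.
Taking `r ∈ (ρ, q - 1)`, the factor `(r/ρ)^n` absorbs every power of `n`.
-/

open MeasureTheory Filter Real

/-- The Gamma probability measure on (0,∞) with density `Γ(α+1)^{-1} x^α e^{-x}`. -/
noncomputable def muAlpha (α : ℝ) : Measure ℝ :=
  MeasureTheory.volume.withDensity (fun x =>
    ENNReal.ofReal (Set.indicator (Set.Ioi (0:ℝ))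
      (fun y => (Real.Gamma (α+1))⁻¹ * y ^ α * Real.exp (-y)) x))

/-- The Laguerre polynomials
`L_n^α(x) = Σ_{k=0}^n (−1)^k Γ(n+α+1)/(Γ(k+α+1)(n−k)! k!) x^k`. -/
noncomputable def laguerre (α : ℝ) (n : ℕ) (x : ℝ) : ℝ :=
  ∑ k ∈ Finset.range (n+1),
    (-1:ℝ)^k * (Real.Gamma (n+α+1) / (Real.Gamma (k+α+1) * (n-k).factorial * k.factorial)) * x^k

/-- The `L²(μ_α)`-normalized Laguerre polynomials
`ℓ_n^α = (n! Γ(α+1)/Γ(n+α+1))^{1/2} L_n^α`. -/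
noncomputable def laguerreL2 (α : ℝ) (n : ℕ) (x : ℝ) : ℝ :=
  Real.sqrt (n.factorial * Real.Gamma (α+1) / Real.Gamma (n+α+1)) * laguerre α n x

open scoped ENNReal Nat

lemma muAlpha_eq_withDensity_restrict (α : ℝ) :
    muAlpha α = (volume.restrict (Set.Ioi 0)).withDensity
      (fun x => ENNReal.ofReal ((Gamma (α + 1))⁻¹ * x ^ α * exp (-x))) := by
  rw [← withDensity_indicator measurableSet_Ioi, muAlpha]
  congr 1
  funext x
  by_cases hx : x ∈ Set.Ioi (0 : ℝ) <;> simp [hx]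

lemma integral_muAlpha {α : ℝ} (hα : -1 < α) (f : ℝ → ℝ) :
    ∫ x, f x ∂muAlpha α = ∫ x in Set.Ioi 0, (Gamma (α + 1))⁻¹ * x ^ α * exp (-x) * f x := by
  rw [muAlpha_eq_withDensity_restrict, integral_withDensity_eq_integral_toReal_smul
    (by fun_prop) (.of_forall fun _ => ENNReal.ofReal_lt_top)]
  refine setIntegral_congr_fun measurableSet_Ioi fun x (hx : 0 < x) => ?_
  have hΓ : 0 < Gamma (α + 1) := Gamma_pos_of_pos (by linarith)
  rw [ENNReal.toReal_ofReal (by positivity), smul_eq_mul]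

lemma integral_pow_mul_exp_muAlpha {α : ℝ} (hα : -1 < α) (k : ℕ) {s : ℝ} (hs : s < 1) :
    ∫ x, x ^ k * exp (s * x) ∂muAlpha α
      = Gamma (k + α + 1) / Gamma (α + 1) * (1 / (1 - s)) ^ (k + α + 1) := by
  rw [integral_muAlpha hα]
  have hk : 0 < (k : ℝ) + α + 1 := by linarith [k.cast_nonneg (α := ℝ)]
  calc ∫ x in Set.Ioi 0, (Gamma (α + 1))⁻¹ * x ^ α * exp (-x) * (x ^ k * exp (s * x))
      = ∫ x in Set.Ioi 0, (Gamma (α + 1))⁻¹ * (x ^ ((k + α + 1) - 1) * exp (-((1 - s) * x))) := by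
        refine setIntegral_congr_fun measurableSet_Ioi fun x (hx : 0 < x) => ?_
        rw [show (k : ℝ) + α + 1 - 1 = k + α by ring, rpow_add hx, rpow_natCast,
          show -((1 - s) * x) = -x + s * x by ring, exp_add]
        ring
    _ = Gamma (k + α + 1) / Gamma (α + 1) * (1 / (1 - s)) ^ (k + α + 1) := by
        rw [integral_const_mul, integral_rpow_mul_exp_neg_mul_Ioi hk (by linarith)]
        ring

lemma integrable_pow_mul_exp_muAlpha {α : ℝ} (hα : -1 < α) (k : ℕ) {s : ℝ} (hs : s < 1) :
    Integrable (fun x => x ^ k * exp (s * x)) (muAlpha α) := by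
  refine .of_integral_ne_zero ?_
  have hk : 0 < (k : ℝ) + α + 1 := by linarith [k.cast_nonneg (α := ℝ)]
  have hΓ : 0 < Gamma (α + 1) := Gamma_pos_of_pos (by linarith)
  have : 0 < 1 - s := by linarith
  rw [integral_pow_mul_exp_muAlpha hα k hs]
  exact (mul_pos (div_pos (Gamma_pos_of_pos hk) hΓ) (by positivity)).ne'

lemma integral_laguerre_mul_exp {α : ℝ} (hα : -1 < α) (n : ℕ) {r : ℝ} (hr : -1 < r) :
    ∫ x, laguerre α n x * exp (r / (1 + r) * x) ∂muAlpha α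
      = Gamma (n + α + 1) / (Gamma (α + 1) * n !) * (1 + r) ^ (α + 1) * (-r) ^ n := by
  have hr' : 0 < 1 + r := by linarith
  have hs : r / (1 + r) < 1 := (div_lt_one hr').2 (by linarith)
  have h1s : 1 / (1 - r / (1 + r)) = 1 + r := by field_simp; ring
  have hexpand : (fun x => laguerre α n x * exp (r / (1 + r) * x)) = fun x =>
      ∑ k ∈ Finset.range (n + 1), (-1) ^ k * (Gamma (n + α + 1) /
        (Gamma (k + α + 1) * (n - k)! * k !)) * (x ^ k * exp (r / (1 + r) * x)) := by
    funext x
    simp only [laguerre, Finset.sum_mul, mul_assoc]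
  rw [hexpand, integral_finsetSum _ fun k _ => (integrable_pow_mul_exp_muAlpha hα k hs).const_mul _]
  simp only [integral_const_mul, integral_pow_mul_exp_muAlpha hα _ hs, h1s]
  have hterm : ∀ k ∈ Finset.range (n + 1),
      (-1) ^ k * (Gamma (n + α + 1) / (Gamma (k + α + 1) * (n - k)! * k !)) *
        (Gamma (k + α + 1) / Gamma (α + 1) * (1 + r) ^ ((k : ℝ) + α + 1))
      = Gamma (n + α + 1) / (Gamma (α + 1) * n !) * (1 + r) ^ (α + 1) *
        ((-(1 + r)) ^ k * 1 ^ (n - k) * (n.choose k : ℝ)) := by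
    intro k hk
    have hkn : k ≤ n := Nat.lt_succ_iff.mp (Finset.mem_range.mp hk)
    have hΓk : 0 < Gamma (k + α + 1) := Gamma_pos_of_pos (by linarith [k.cast_nonneg (α := ℝ)])
    have hchoose : (n.choose k : ℝ) * k ! * (n - k)! = n ! := by
      exact_mod_cast Nat.choose_mul_factorial_mul_factorial hkn
    have hchoose_pos : (0 : ℝ) < n.choose k := by exact_mod_cast Nat.choose_pos hkn
    have hpow : (1 + r) ^ ((k : ℝ) + α + 1) = (1 + r) ^ (α + 1) * (1 + r) ^ k := by
      rw [← rpow_natCast, ← rpow_add hr', add_comm (α + 1), add_assoc]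
    rw [hpow, ← hchoose, neg_pow (1 + r)]
    field_simp
    ring
  rw [Finset.sum_congr rfl hterm, ← Finset.mul_sum, ← add_pow]
  ring

lemma integral_laguerreL2_mul_exp {α : ℝ} (hα : -1 < α) (n : ℕ) {r : ℝ} (hr : -1 < r) :
    ∫ x, laguerreL2 α n x * exp (r / (1 + r) * x) ∂muAlpha α
      = √(Gamma (n + α + 1) / (Gamma (α + 1) * n !)) * (1 + r) ^ (α + 1) * (-r) ^ n := by
  simp only [laguerreL2, mul_assoc, integral_const_mul]
  rw [integral_laguerre_mul_exp hα n hr]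
  set X := Gamma (n + α + 1) / (Gamma (α + 1) * n !)
  have hX : 0 < X := by
    have := Gamma_pos_of_pos (show 0 < (n : ℝ) + α + 1 by linarith [n.cast_nonneg (α := ℝ)])
    have := Gamma_pos_of_pos (show 0 < α + 1 by linarith)
    positivity
  have hnorm : √(n ! * Gamma (α + 1) / Gamma (n + α + 1)) * X = √X := by
    rw [show (n ! : ℝ) * Gamma (α + 1) / Gamma (n + α + 1) = X⁻¹ by simp only [X, inv_div]; ring,
      sqrt_inv, inv_mul_eq_div, div_eq_iff (sqrt_pos.2 hX).ne', mul_self_sqrt hX.le]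
  rw [← hnorm]
  ring

lemma Gamma_mul_factorial_le_Gamma_add_nat {a : ℝ} (ha : 1 ≤ a) (m : ℕ) :
    Gamma a * m ! ≤ Gamma (a + m) := by
  induction m with
  | zero => simp
  | succ m ih =>
    have ham : 0 < a + m := by linarith [m.cast_nonneg (α := ℝ)]
    rw [Nat.factorial_succ, Nat.cast_mul, Nat.cast_succ, ← add_assoc,
      Gamma_add_one ham.ne']
    have hΓ := Gamma_pos_of_pos (show 0 < a by linarith)
    calc Gamma a * ((m + 1) * m !) = (m + 1) * (Gamma a * m !) := by ring
      _ ≤ (a + m) * Gamma (a + m) := mul_le_mul (by linarith) ih (by positivity) ham.le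

lemma div_le_Gamma_div_Gamma_mul_factorial {α : ℝ} (hα : -1 < α) {n : ℕ} (hn : 1 ≤ n) :
    (α + 1) / n ≤ Gamma (n + α + 1) / (Gamma (α + 1) * n !) := by
  have hΓ : 0 < Gamma (α + 1) := Gamma_pos_of_pos (by linarith)
  have hn' : (0 : ℝ) < n := by exact_mod_cast hn
  have key := Gamma_mul_factorial_le_Gamma_add_nat (a := α + 2) (by linarith) (n - 1)
  rw [show α + 2 = (α + 1) + 1 by ring, Gamma_add_one (by linarith), Nat.cast_sub hn, Nat.cast_one,
    show α + 1 + 1 + (n - 1 : ℝ) = n + α + 1 by ring] at key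
  have hfact : (n ! : ℝ) = n * (n - 1)! := by
    exact_mod_cast (Nat.mul_factorial_pred (by omega)).symm
  rw [div_le_div_iff₀ hn' (by positivity), hfact]
  nlinarith

lemma enorm_integral_mul_le_eLpNorm_mul_eLpNorm {X 𝕜 : Type*} [MeasurableSpace X] {μ : Measure X}
    [NormedRing 𝕜] [NormedSpace ℝ 𝕜] {p q : ℝ≥0∞} [p.HolderConjugate q] {f g : X → 𝕜}
    (hf : AEStronglyMeasurable f μ) (hg : AEStronglyMeasurable g μ) :
    ‖∫ x, f x * g x ∂μ‖ₑ ≤ eLpNorm f p μ * eLpNorm g q μ :=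
  calc ‖∫ x, f x * g x ∂μ‖ₑ ≤ ∫⁻ x, ‖f x * g x‖ₑ ∂μ := enorm_integral_le_lintegral_enorm _
    _ = eLpNorm (fun x => f x * g x) 1 μ := eLpNorm_one_eq_lintegral_enorm.symm
    _ ≤ eLpNorm f p μ * eLpNorm g q μ := by
      simpa using eLpNorm_le_eLpNorm_mul_eLpNorm'_of_norm hf hg (· * ·) 1
        (.of_forall fun x => by simpa using norm_mul_le (f x) (g x))

lemma eLpNorm_exp_mul_muAlpha {α : ℝ} (hα : -1 < α) {p s : ℝ} (hp : 0 < p) (hps : p * s < 1) :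
    eLpNorm (fun x => exp (s * x)) (ENNReal.ofReal p) (muAlpha α)
      = ENNReal.ofReal ((1 / (1 - p * s)) ^ ((α + 1) / p)) := by
  have hΓ : 0 < Gamma (α + 1) := Gamma_pos_of_pos (by linarith)
  have hps' : 0 < 1 / (1 - p * s) := one_div_pos.2 (by linarith)
  have hint := integral_pow_mul_exp_muAlpha hα 0 hps
  simp only [pow_zero, one_mul, Nat.cast_zero, zero_add, div_self hΓ.ne'] at hint
  have hpow : ∀ x, ‖exp (s * x)‖ₑ ^ p = ENNReal.ofReal (exp (p * s * x)) := fun x => by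
    rw [Real.enorm_eq_ofReal (exp_pos _).le, ENNReal.ofReal_rpow_of_nonneg (exp_pos _).le hp.le,
      ← exp_mul]
    ring_nf
  rw [eLpNorm_eq_lintegral_rpow_enorm_toReal (by simpa using hp) ENNReal.ofReal_ne_top,
    ENNReal.toReal_ofReal hp.le]
  simp only [hpow]
  rw [← ofReal_integral_eq_lintegral_ofReal
      (by simpa using integrable_pow_mul_exp_muAlpha hα 0 hps) (.of_forall fun _ => (exp_pos _).le),
    hint, ENNReal.ofReal_rpow_of_nonneg (by positivity) (by positivity), ← rpow_mul hps'.le]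
  ring_nf

lemma exists_pos_mul_pow_div_sqrt_le_eLpNorm_laguerreL2 {α : ℝ} (hα : -1 < α) {p r : ℝ}
    (hr : 0 < r) (hrp : r < p - 1) :
    ∃ K > 0, ∀ n : ℕ, 1 ≤ n →
      ENNReal.ofReal (K * r ^ n / √n)
        ≤ eLpNorm (laguerreL2 α n) (ENNReal.ofReal p) (muAlpha α) := by
  have hp : 1 < p := by linarith
  set p' := p / (p - 1)
  have hpp' : p.HolderConjugate p' := .conjExponent hp
  have := hpp'.ennrealOfReal
  have hσ : p' * (r / (1 + r)) < 1 := by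
    rw [div_mul_div_comm, div_lt_one (by nlinarith)]
    nlinarith
  set B := (1 / (1 - p' * (r / (1 + r)))) ^ ((α + 1) / p')
  have hB : 0 < B := rpow_pos_of_pos (one_div_pos.2 (by linarith)) _
  have hr' : 0 < (1 + r) ^ (α + 1) := rpow_pos_of_pos (by linarith) _
  have hα' : 0 < α + 1 := by linarith
  refine ⟨√(α + 1) * (1 + r) ^ (α + 1) / B, by positivity, fun n hn => ?_⟩
  have hsqrt : √(α + 1) / √n ≤ √(Gamma (n + α + 1) / (Gamma (α + 1) * n !)) := by
    rw [← sqrt_div hα'.le]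
    exact sqrt_le_sqrt (div_le_Gamma_div_Gamma_mul_factorial hα hn)
  have hHolder := enorm_integral_mul_le_eLpNorm_mul_eLpNorm (μ := muAlpha α)
    (p := ENNReal.ofReal p) (q := ENNReal.ofReal p') (f := laguerreL2 α n)
    (g := fun x => exp (r / (1 + r) * x)) (by unfold laguerreL2 laguerre; fun_prop) (by fun_prop)
  rw [integral_laguerreL2_mul_exp hα n (by linarith), eLpNorm_exp_mul_muAlpha hα hpp'.symm.pos hσ,
    Real.enorm_eq_ofReal_abs] at hHolder
  refine le_trans ?_ (ENNReal.div_le_of_le_mul hHolder)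
  rw [← ENNReal.ofReal_div_of_pos hB]
  refine ENNReal.ofReal_le_ofReal ?_
  rw [abs_mul, abs_mul, abs_of_nonneg (sqrt_nonneg _), abs_of_pos hr', abs_pow, abs_neg,
    abs_of_pos hr]
  calc √(α + 1) * (1 + r) ^ (α + 1) / B * r ^ n / √n
      = √(α + 1) / √n * ((1 + r) ^ (α + 1) * r ^ n / B) := by ring
    _ ≤ √(Gamma (n + α + 1) / (Gamma (α + 1) * n !)) * ((1 + r) ^ (α + 1) * r ^ n / B) := by
      gcongr
    _ = _ := by ring

lemma exists_pos_rpow_le_mul_pow {t : ℝ} (ht : 1 < t) (β : ℝ) :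
    ∃ C > 0, ∀ n : ℕ, (n : ℝ) ^ β ≤ C * t ^ n := by
  have hO := ((isLittleO_rpow_exp_pos_mul_atTop β (log_pos ht)).comp_tendsto
    tendsto_natCast_atTop_atTop).isBigO
  obtain ⟨C, hC⟩ := Asymptotics.isBigO_top.1
    (hO.nat_of_atTop (l := ⊤) (.of_forall fun n h => absurd h (exp_pos _).ne'))
  have hbound (n : ℕ) : (n : ℝ) ^ β ≤ C * t ^ n := by
    simpa [abs_of_nonneg (rpow_nonneg n.cast_nonneg β), ← rpow_def_of_pos (by linarith : 0 < t),
      abs_of_pos (by linarith : 0 < t)] using hC n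
  refine ⟨C, ?_, hbound⟩
  have := hbound 1
  simp only [Nat.cast_one, one_rpow, pow_one] at this
  by_contra! hC0
  nlinarith

theorem stmt7_general (q α : ℝ) (hα : -1 < α) :
    ∀ ρ : ℝ, 0 < ρ → ρ < q - 1 →
      ∃ c : ℝ, 0 < c ∧ ∀ n : ℕ, 1 ≤ n →
        ENNReal.ofReal (c * ρ^n * (n:ℝ) ^ (α/2))
          ≤ eLpNorm (laguerreL2 α n) (ENNReal.ofReal q) (muAlpha α) := by
  intro ρ hρ hρq
  obtain ⟨r, hρr, hrq⟩ := exists_between hρq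
  obtain ⟨K, hK, hlower⟩ :=
    exists_pos_mul_pow_div_sqrt_le_eLpNorm_laguerreL2 hα (hρ.trans hρr) hrq
  obtain ⟨C, hC, hpoly⟩ := exists_pos_rpow_le_mul_pow ((one_lt_div hρ).2 hρr) ((α + 1) / 2)
  refine ⟨K / C, by positivity, fun n hn => (ENNReal.ofReal_le_ofReal ?_).trans (hlower n hn)⟩
  have hn' : (0 : ℝ) < n := by exact_mod_cast hn
  have hsplit : (n : ℝ) ^ (α / 2) = (n : ℝ) ^ ((α + 1) / 2) / √n := by
    rw [sqrt_eq_rpow, ← rpow_sub hn']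
    ring_nf
  calc K / C * ρ ^ n * (n : ℝ) ^ (α / 2) = K / C * ρ ^ n * (n : ℝ) ^ ((α + 1) / 2) / √n := by
        rw [hsplit]; ring
    _ ≤ K / C * ρ ^ n * (C * (r / ρ) ^ n) / √n := by gcongr; exact hpoly n
    _ = K * r ^ n / √n := by rw [div_pow]; field_simp

/-- For q > 2, α > −1 and ρ ∈ (0, q−1) there is c > 0 such that for all n ≥ 1,
`‖ℓ_n^α‖_{L^q(μ_α)} ≥ c ρ^n n^{α/2}`. -/
theorem stmt7 (q α : ℝ) (hq : 2 < q) (hα : -1 < α) :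
    ∀ ρ : ℝ, 0 < ρ → ρ < q - 1 →
      ∃ c : ℝ, 0 < c ∧ ∀ n : ℕ, 1 ≤ n →
        ENNReal.ofReal (c * ρ^n * (n:ℝ) ^ (α/2))
          ≤ eLpNorm (laguerreL2 α n) (ENNReal.ofReal q) (muAlpha α) :=
  stmt7_general q α hα
end

section
/- Fix σ > 0. There exists a constant C > 0 such that for every t > 0, ∫_0^∞ t · s^{−3/2} · e^{−t²/(4s)} · min(1,s)^{−σ/2} ds ≤ C · min(1,t)^{−σ}. -/
/-!
Splitting `min(1,s)^(-σ/2) ≤ 1 + s^(-σ/2)` reduces the claim to the weights `s^(-a/2)` with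
`a = 0` and `a = σ`. For these the substitution `s = t²u` shows that the integral is exactly
`t^(-a) * kernelMoment a`, and `kernelMoment a` is finite because `u ↦ 1/u` turns it into a
Gamma integral. Hence the integral is at most `M₀ + t^(-σ) M_σ ≤ (M₀ + M_σ + 1) min(1,t)^(-σ)`.
-/

open MeasureTheory Real Set
open scoped ENNReal

theorem setLIntegral_Ioi_zero_eq_ofReal_mul_comp_mul_left (g : ℝ → ℝ≥0∞) {c : ℝ} (hc : 0 < c) :
    ∫⁻ s in Ioi 0, g s = ENNReal.ofReal c * ∫⁻ u in Ioi 0, g (c * u) := by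
  have h := lintegral_image_eq_lintegral_abs_deriv_mul (f := (c * ·)) (measurableSet_Ioi (a := 0))
    (fun x _ => ((hasDerivAt_id x).const_mul c).hasDerivWithinAt)
    (mul_right_injective₀ hc.ne').injOn g
  simp only [mul_one, image_const_mul_Ioi_zero hc, abs_of_pos hc] at h
  rw [h, lintegral_const_mul' _ _ ENNReal.ofReal_ne_top]

theorem integrableOn_rpow_neg_mul_exp_neg_div {b c : ℝ} (hb : 1 < b) (hc : 0 < c) :
    IntegrableOn (fun u : ℝ => u ^ (-b) * exp (-c / u)) (Ioi 0) := by
  have h := integrableOn_rpow_mul_exp_neg_mul_rpow (s := b - 2) (by linarith) one_pos hc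
  rw [← integrableOn_Ioi_comp_rpow_iff' _ (p := -1) (by norm_num)] at h
  refine h.congr_fun (fun u (hu : 0 < u) => ?_) measurableSet_Ioi
  simp only [smul_eq_mul, rpow_one, rpow_neg_one]
  rw [inv_rpow hu.le, ← rpow_neg hu.le, ← mul_assoc, ← rpow_add hu, div_eq_mul_inv, neg_mul]
  ring_nf

theorem min_one_rpow_le_one_add_rpow {s : ℝ} (hs : 0 ≤ s) (b : ℝ) : min 1 s ^ b ≤ 1 + s ^ b := by
  rcases le_total 1 s with h | h
  · rw [min_eq_left h, one_rpow]
    linarith [rpow_nonneg hs b]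
  · rw [min_eq_right h]
    linarith

noncomputable def kernelMoment (a : ℝ) : ℝ :=
  ∫ u in Ioi 0, u ^ (-(3:ℝ)/2) * exp (-1/(4*u)) * u ^ (-a/2)

theorem integrableOn_kernelMoment {a : ℝ} (ha : -1 < a) :
    IntegrableOn (fun u : ℝ => u ^ (-(3:ℝ)/2) * exp (-1/(4*u)) * u ^ (-a/2)) (Ioi 0) := by
  refine (integrableOn_rpow_neg_mul_exp_neg_div (b := 3/2 + a/2) (c := 1/4) (by linarith)
    (by norm_num)).congr_fun (fun u (hu : 0 < u) => ?_) measurableSet_Ioi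
  rw [mul_right_comm, ← rpow_add hu]
  ring_nf

theorem kernelMoment_nonneg (a : ℝ) : 0 ≤ kernelMoment a :=
  setIntegral_nonneg measurableSet_Ioi fun u (hu : 0 < u) => by positivity

theorem sq_mul_kernel_sq_mul_eq {t u : ℝ} (ht : 0 < t) (hu : 0 < u) (a : ℝ) :
    t ^ 2 * (t * (t ^ 2 * u) ^ (-(3:ℝ)/2) * exp (-t ^ 2 / (4 * (t ^ 2 * u))) * (t ^ 2 * u) ^ (-a/2))
      = t ^ (-a) * (u ^ (-(3:ℝ)/2) * exp (-1/(4*u)) * u ^ (-a/2)) := by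
  have hsq : ∀ x : ℝ, (t ^ 2 * u) ^ x = t ^ (2 * x) * u ^ x := fun x => by
    rw [mul_rpow (by positivity) hu.le, ← rpow_natCast, ← rpow_mul ht.le, Nat.cast_ofNat]
  have hexp : -t ^ 2 / (4 * (t ^ 2 * u)) = -1/(4*u) := by field_simp
  have hcube : t ^ 2 * t * t ^ (2 * (-(3:ℝ)/2)) = 1 := by
    rw [show 2 * (-(3:ℝ)/2) = -(3:ℕ) by norm_num, rpow_neg ht.le, rpow_natCast]
    field_simp
  rw [hsq, hsq, hexp, show 2 * (-a/2) = -a by ring]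
  linear_combination (t ^ (-a) * (u ^ (-(3:ℝ)/2) * exp (-1/(4*u)) * u ^ (-a/2))) * hcube

theorem lintegral_kernel_eq {a t : ℝ} (ha : -1 < a) (ht : 0 < t) :
    ∫⁻ s in Ioi 0,
        ENNReal.ofReal (t * s ^ (-(3:ℝ)/2) * exp (-t ^ 2 / (4 * s)) * s ^ (-a/2))
      = ENNReal.ofReal (t ^ (-a) * kernelMoment a) := by
  rw [setLIntegral_Ioi_zero_eq_ofReal_mul_comp_mul_left _ (pow_pos ht 2),
    ← lintegral_const_mul' _ _ ENNReal.ofReal_ne_top, kernelMoment, ← integral_const_mul,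
    ofReal_integral_eq_lintegral_ofReal ((integrableOn_kernelMoment ha).const_mul _)]
  · refine setLIntegral_congr_fun measurableSet_Ioi fun u (hu : 0 < u) => ?_
    rw [← ENNReal.ofReal_mul (by positivity), sq_mul_kernel_sq_mul_eq ht hu]
  · filter_upwards [ae_restrict_mem measurableSet_Ioi] with u (hu : 0 < u)
    positivity

/-- For σ > 0 there is C > 0 such that for every t > 0,
`∫_0^∞ t s^{−3/2} e^{−t²/(4s)} min(1,s)^{−σ/2} ds ≤ C min(1,t)^{−σ}`. -/
theorem stmt13 (σ : ℝ) (hσ : 0 < σ) :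
    ∃ C : ℝ, 0 < C ∧ ∀ t : ℝ, 0 < t →
      (∫⁻ s in Set.Ioi (0:ℝ),
          ENNReal.ofReal (t * s ^ (-(3:ℝ)/2) * Real.exp (-t^2/(4*s)) * (min 1 s) ^ (-σ/2)))
        ≤ ENNReal.ofReal (C * (min 1 t) ^ (-σ)) := by
  have hM₀ := kernelMoment_nonneg 0
  have hMσ := kernelMoment_nonneg σ
  refine ⟨kernelMoment 0 + kernelMoment σ + 1, by positivity, fun t ht => ?_⟩
  have hmin : 0 < min 1 t := lt_min one_pos ht
  have h_one : 1 ≤ min 1 t ^ (-σ) :=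
    one_le_rpow_of_pos_of_le_one_of_nonpos hmin (min_le_left _ _) (by linarith)
  have h_t : t ^ (-σ) ≤ min 1 t ^ (-σ) :=
    rpow_le_rpow_of_nonpos hmin (min_le_right _ _) (by linarith)
  have h_zero := lintegral_kernel_eq (a := 0) (by norm_num) ht
  simp only [neg_zero, zero_div, rpow_zero, mul_one, one_mul] at h_zero
  calc (∫⁻ s in Ioi (0:ℝ),
          ENNReal.ofReal (t * s ^ (-(3:ℝ)/2) * Real.exp (-t^2/(4*s)) * (min 1 s) ^ (-σ/2)))
      ≤ ∫⁻ s in Ioi (0:ℝ), (ENNReal.ofReal (t * s ^ (-(3:ℝ)/2) * exp (-t^2/(4*s)))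
          + ENNReal.ofReal (t * s ^ (-(3:ℝ)/2) * exp (-t^2/(4*s)) * s ^ (-σ/2))) := by
        refine setLIntegral_mono' measurableSet_Ioi fun s (hs : 0 < s) => ?_
        refine (ENNReal.ofReal_le_ofReal ?_).trans ENNReal.ofReal_add_le
        have h_split := min_one_rpow_le_one_add_rpow hs.le (-σ/2)
        have h_pos : 0 ≤ t * s ^ (-(3:ℝ)/2) * exp (-t^2/(4*s)) := by positivity
        nlinarith
    _ = ENNReal.ofReal (kernelMoment 0) + ENNReal.ofReal (t ^ (-σ) * kernelMoment σ) := by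
        rw [lintegral_add_left (by fun_prop), h_zero, lintegral_kernel_eq (by linarith) ht]
    _ ≤ ENNReal.ofReal ((kernelMoment 0 + kernelMoment σ + 1) * min 1 t ^ (-σ)) := by
        rw [← ENNReal.ofReal_add hM₀ (by positivity)]
        apply ENNReal.ofReal_le_ofReal
        nlinarith
end

section
/- Let b ≥ 0 and t > 0, and let f : ℕ → [0,∞) satisfy f(n) ≥ bn for all n ≥ 1 and f(n)/n → b as n → ∞. Define F_t(z) := e^{−t f(0)} + Σ_{n≥1} e^{−t f(n)} z^n / n! for z ≥ 0. Then F_t(z) is finite for every z ≥ 0, and lim_{z→+∞} log F_t(z) / z = e^{−bt}. -/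
/-!
With `a n := exp (-t f n)` and `c := exp (-b t)`, the hypothesis `f n ≥ b n` gives `a n ≤ c ^ n`,
so `F_t z ≤ ∑ (c z)^n / n! = exp (c z)`. Conversely `f n / n → b` gives, for every `d < c`,
`a n ≥ d ^ n` for all large `n`, so `F_t z` dominates the tail `exp (d z) - (polynomial in z)`
of the series of `exp (d z)`, which exceeds `exp (d' z)` for any `d' < d` once `z` is large.
Hence `log F_t z / z` is squeezed to `c`.
-/

open Filter Real Asymptotics Topology Nat

noncomputable def expGenFun (a : ℕ → ℝ) (z : ℝ) : ℝ := ∑' n, a n * z ^ n / n !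

theorem Real.hasSum_pow_div_factorial (x : ℝ) : HasSum (fun n => x ^ n / n !) (exp x) := by
  rw [Real.exp_eq_exp_ℝ]
  exact NormedSpace.expSeries_div_hasSum_exp x

theorem tendsto_log_div_of_exp_bounds {F : ℝ → ℝ} {c : ℝ}
    (hup : ∀ᶠ z in atTop, F z ≤ exp (c * z))
    (hlow : ∀ c' < c, ∀ᶠ z in atTop, exp (c' * z) ≤ F z) :
    Tendsto (fun z => log (F z) / z) atTop (𝓝 c) := by
  rw [tendsto_order]
  constructor
  · intro c' hc'
    obtain ⟨c'', hc'c'', hc''c⟩ := exists_between hc'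
    filter_upwards [hlow c'' hc''c, eventually_gt_atTop 0] with z hz hz0
    rw [lt_div_iff₀ hz0]
    calc c' * z < c'' * z := by gcongr
      _ = log (exp (c'' * z)) := (log_exp _).symm
      _ ≤ log (F z) := log_le_log (exp_pos _) hz
  · intro c' hc'
    filter_upwards [hup, hlow (c - 1) (by linarith), eventually_gt_atTop 0] with z hup hpos hz0
    rw [div_lt_iff₀ hz0]
    calc log (F z) ≤ c * z := (log_le_iff_le_exp ((exp_pos _).trans_le hpos)).2 hup
      _ < c' * z := by gcongr

section expGenFun

variable {a : ℕ → ℝ} {c d z : ℝ}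

theorem mul_pow_div_factorial_le_of_le_pow {n : ℕ} (ha : a n ≤ c ^ n) (hz : 0 ≤ z) :
    a n * z ^ n / n ! ≤ (c * z) ^ n / n ! := by
  rw [mul_pow]
  gcongr

theorem summable_expGenFun (ha0 : ∀ n, 0 ≤ a n) (hac : ∀ n, a n ≤ c ^ n) (hz : 0 ≤ z) :
    Summable (fun n => a n * z ^ n / n !) :=
  (hasSum_pow_div_factorial (c * z)).summable.of_nonneg_of_le (fun n => by have := ha0 n; positivity)
    fun n => mul_pow_div_factorial_le_of_le_pow (hac n) hz

theorem expGenFun_le_exp (ha0 : ∀ n, 0 ≤ a n) (hac : ∀ n, a n ≤ c ^ n) (hz : 0 ≤ z) :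
    expGenFun a z ≤ exp (c * z) :=
  (hasSum_pow_div_factorial (c * z)).tsum_eq ▸
    (summable_expGenFun ha0 hac hz).tsum_le_tsum
      (fun n => mul_pow_div_factorial_le_of_le_pow (hac n) hz)
      (hasSum_pow_div_factorial (c * z)).summable

theorem exp_sub_sum_range_le_expGenFun {N : ℕ} (ha0 : ∀ n, 0 ≤ a n)
    (hs : Summable (fun n => a n * z ^ n / n !)) (hda : ∀ n ≥ N, d ^ n ≤ a n) (hz : 0 ≤ z) :
    exp (d * z) - ∑ n ∈ Finset.range N, (d * z) ^ n / n ! ≤ expGenFun a z := by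
  have hexp := (hasSum_pow_div_factorial (d * z)).summable.sum_add_tsum_nat_add N
  rw [(hasSum_pow_div_factorial (d * z)).tsum_eq] at hexp
  have hF := hs.sum_add_tsum_nat_add N
  have htail : ∑' n, (d * z) ^ (n + N) / (n + N)! ≤ ∑' n, a (n + N) * z ^ (n + N) / (n + N)! :=
    ((summable_nat_add_iff N).2 (hasSum_pow_div_factorial (d * z)).summable).tsum_le_tsum
      (fun n => by rw [mul_pow]; gcongr; exact hda _ (Nat.le_add_left N n))
      ((summable_nat_add_iff N).2 hs)
  have hhead : 0 ≤ ∑ n ∈ Finset.range N, a n * z ^ n / n ! :=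
    Finset.sum_nonneg fun n _ => by have := ha0 n; positivity
  rw [expGenFun]
  linarith

theorem isLittleO_sum_range_pow_div_factorial_exp (hd : 0 < d) (N : ℕ) :
    (fun z => ∑ n ∈ Finset.range N, (d * z) ^ n / n !) =o[atTop] fun z => exp (d * z) := by
  refine IsLittleO.fun_sum fun n _ => ?_
  simpa only [mul_pow, mul_div_right_comm] using
    (isLittleO_pow_exp_pos_mul_atTop n hd).const_mul_left (d ^ n / n !)

theorem eventually_exp_le_expGenFun (ha0 : ∀ n, 0 ≤ a n)
    (hs : ∀ z, 0 ≤ z → Summable (fun n => a n * z ^ n / n !))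
    (hd : 0 < d) (hda : ∀ᶠ n in atTop, d ^ n ≤ a n) {c' : ℝ} (hc' : c' < d) :
    ∀ᶠ z in atTop, exp (c' * z) ≤ expGenFun a z := by
  obtain ⟨N, hN⟩ := eventually_atTop.1 hda
  have hexp : (fun z => exp (c' * z)) =o[atTop] fun z => exp (d * z) := by
    rw [isLittleO_exp_comp_exp_comp]
    simpa only [id, ← sub_mul] using tendsto_id.const_mul_atTop (sub_pos.2 hc')
  filter_upwards [((isLittleO_sum_range_pow_div_factorial_exp hd N).add hexp).def one_pos,
    eventually_ge_atTop 0] with z hsmall hz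
  have := exp_sub_sum_range_le_expGenFun ha0 (hs z hz) hN hz
  rw [one_mul, Real.norm_of_nonneg (exp_pos _).le, Real.norm_eq_abs] at hsmall
  linarith [le_abs_self (∑ n ∈ Finset.range N, (d * z) ^ n / n ! + exp (c' * z))]

theorem tendsto_log_expGenFun_div (ha0 : ∀ n, 0 ≤ a n) (hac : ∀ n, a n ≤ c ^ n)
    (hlow : ∀ d, 0 < d → d < c → ∀ᶠ n in atTop, d ^ n ≤ a n) (hc : 0 < c) :
    Tendsto (fun z => log (expGenFun a z) / z) atTop (𝓝 c) := by
  refine tendsto_log_div_of_exp_bounds ?_ fun c' hc' => ?_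
  · filter_upwards [eventually_ge_atTop 0] with z hz using expGenFun_le_exp ha0 hac hz
  · obtain ⟨d, hd, hdc⟩ := exists_between (max_lt hc' hc)
    exact eventually_exp_le_expGenFun ha0 (fun z hz => summable_expGenFun ha0 hac hz)
      ((le_max_right _ _).trans_lt hd) (hlow d ((le_max_right _ _).trans_lt hd) hdc)
      ((le_max_left _ _).trans_lt hd)

end expGenFun

theorem exp_neg_mul_le_exp_neg_mul_pow {b t : ℝ} {f : ℕ → ℝ} (ht : 0 < t) (hf0 : 0 ≤ f 0)
    (hfb : ∀ n : ℕ, 1 ≤ n → b * n ≤ f n) (n : ℕ) : exp (-t * f n) ≤ exp (-b * t) ^ n := by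
  rw [← exp_nat_mul, exp_le_exp]
  rcases Nat.eq_zero_or_pos n with rfl | hn
  · simpa using mul_nonneg ht.le hf0
  · nlinarith [hfb n hn]

theorem eventually_pow_le_exp_neg_mul {b t d : ℝ} {f : ℕ → ℝ} (ht : 0 < t)
    (hlim : Tendsto (fun n : ℕ => f n / n) atTop (𝓝 b)) (hd : 0 < d) (hdb : d < exp (-b * t)) :
    ∀ᶠ n : ℕ in atTop, d ^ n ≤ exp (-t * f n) := by
  have hb : b < -log d / t := by
    rw [lt_div_iff₀ ht]
    linarith [(log_lt_iff_lt_exp hd).2 hdb]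
  filter_upwards [hlim.eventually (eventually_lt_nhds hb), eventually_gt_atTop 0] with n hn hn0
  rw [div_lt_div_iff₀ (by exact_mod_cast hn0) ht] at hn
  rw [← exp_log hd, ← exp_nat_mul, exp_le_exp]
  linarith

theorem stmt17_general (b t : ℝ) (ht : 0 < t) (f : ℕ → ℝ)
    (hf0 : ∀ n, 0 ≤ f n) (hfb : ∀ n : ℕ, 1 ≤ n → b * n ≤ f n)
    (hlim : Tendsto (fun n : ℕ => f n / n) atTop (nhds b)) :
    (∀ z : ℝ, 0 ≤ z →
        Summable (fun n : ℕ => Real.exp (-t * f (n+1)) * z^(n+1) / (n+1).factorial)) ∧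
    Tendsto (fun z : ℝ =>
        Real.log (Real.exp (-t * f 0) +
          ∑' n : ℕ, Real.exp (-t * f (n+1)) * z^(n+1) / (n+1).factorial) / z)
      atTop (nhds (Real.exp (-b * t))) := by
  have ha0 : ∀ n, 0 ≤ exp (-t * f n) := fun n => (exp_pos _).le
  have hac := exp_neg_mul_le_exp_neg_mul_pow ht (hf0 0) hfb
  have hs : ∀ z, 0 ≤ z → Summable (fun n => exp (-t * f n) * z ^ n / n !) :=
    fun z hz => summable_expGenFun ha0 hac hz
  refine ⟨fun z hz => (summable_nat_add_iff 1).2 (hs z hz), ?_⟩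
  refine (tendsto_log_expGenFun_div ha0 hac
    (fun d hd hdc => eventually_pow_le_exp_neg_mul ht hlim hd hdc) (exp_pos _)).congr' ?_
  filter_upwards [eventually_ge_atTop 0] with z hz
  rw [expGenFun, (hs z hz).tsum_eq_zero_add]
  simp

/-- Let b ≥ 0, t > 0 and f : ℕ → [0,∞) with f(n) ≥ bn for n ≥ 1 and
f(n)/n → b. Then `F_t(z) := e^{−t f(0)} + Σ_{n≥1} e^{−t f(n)} z^n/n!` is finite for every
z ≥ 0 (i.e. the series is summable) and `log F_t(z)/z → e^{−bt}` as z → +∞. -/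
theorem stmt17 (b t : ℝ) (hb : 0 ≤ b) (ht : 0 < t) (f : ℕ → ℝ)
    (hf0 : ∀ n, 0 ≤ f n) (hfb : ∀ n : ℕ, 1 ≤ n → b * n ≤ f n)
    (hlim : Tendsto (fun n : ℕ => f n / n) atTop (nhds b)) :
    (∀ z : ℝ, 0 ≤ z →
        Summable (fun n : ℕ => Real.exp (-t * f (n+1)) * z^(n+1) / (n+1).factorial)) ∧
    Tendsto (fun z : ℝ =>
        Real.log (Real.exp (-t * f 0) +
          ∑' n : ℕ, Real.exp (-t * f (n+1)) * z^(n+1) / (n+1).factorial) / z)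
      atTop (nhds (Real.exp (-b * t))) :=
  stmt17_general b t ht f hf0 hfb hlim
end
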